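/- Preservation at type Idx: if ⊢ M : Idx is derivable for a closed qPCF term M and M ⇓¹ N, then ⊢ N : Idx is derivable. -/

import Mathlib

set_option maxHeartbeats 1000000

namespace QPCF

-- qPCF terms and types, mutually defined (types contain index terms in `circ`).
mutual
inductive Tm : Type
  | var : ℕ → Tm
  | lam : ℕ → Ty → Tm → Tm
  | app : Tm → Tm → Tm
  | num : ℕ → Tm
  | predOp : Tm
  | succOp : Tm
  | ifOp : Tm
  | fix : Ty → Tm
  | setOp : Tm
  | getOp : Tm
  | gate : ℕ → ℕ → Tm      -- `gate u k` : gate named `u` in 𝒰(k), i.e. of arity k+1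
  | seqOp : Tm              -- sequential composition ∶
  | parOp : Tm              -- parallel composition ∥
  | iterOp : Tm
  | revOp : Tm
  | add : Tm → Tm → Tm      -- index operation +
  | mul : Tm → Tm → Tm      -- index operation *
  | size : Tm → Tm
  | dmeasOp : Tm

inductive Ty : Type
  | nat : Ty
  | idx : Ty
  | circ : Tm → Ty
  | arrow : Ty → Ty → Ty    -- σ → τ  (abbreviation for Πx^σ.τ with x not free in τ)
  | pi : ℕ → Ty → Ty → Ty
end

-- Substitution of term `N` for variable `x` in terms and in types.
mutual
def substTm : Tm → ℕ → Tm → Tm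
  | Tm.var y, x, N => if y = x then N else Tm.var y
  | Tm.lam y σ M, x, N => Tm.lam y (substTy σ x N) (if y = x then M else substTm M x N)
  | Tm.app M₁ M₂, x, N => Tm.app (substTm M₁ x N) (substTm M₂ x N)
  | Tm.num n, _, _ => Tm.num n
  | Tm.predOp, _, _ => Tm.predOp
  | Tm.succOp, _, _ => Tm.succOp
  | Tm.ifOp, _, _ => Tm.ifOp
  | Tm.fix σ, x, N => Tm.fix (substTy σ x N)
  | Tm.setOp, _, _ => Tm.setOp
  | Tm.getOp, _, _ => Tm.getOp
  | Tm.gate u k, _, _ => Tm.gate u k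
  | Tm.seqOp, _, _ => Tm.seqOp
  | Tm.parOp, _, _ => Tm.parOp
  | Tm.iterOp, _, _ => Tm.iterOp
  | Tm.revOp, _, _ => Tm.revOp
  | Tm.add E₀ E₁, x, N => Tm.add (substTm E₀ x N) (substTm E₁ x N)
  | Tm.mul E₀ E₁, x, N => Tm.mul (substTm E₀ x N) (substTm E₁ x N)
  | Tm.size M, x, N => Tm.size (substTm M x N)
  | Tm.dmeasOp, _, _ => Tm.dmeasOp

def substTy : Ty → ℕ → Tm → Ty
  | Ty.nat, _, _ => Ty.nat
  | Ty.idx, _, _ => Ty.idx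
  | Ty.circ E, x, N => Ty.circ (substTm E x N)
  | Ty.arrow σ τ, x, N => Ty.arrow (substTy σ x N) (substTy τ x N)
  | Ty.pi y σ τ, x, N => Ty.pi y (substTy σ x N) (if y = x then τ else substTy τ x N)
end

-- Free variables of terms and types.
mutual
def freeTm : Tm → Finset ℕ
  | Tm.var y => {y}
  | Tm.lam y σ M => freeTy σ ∪ (freeTm M \ {y})
  | Tm.app M₁ M₂ => freeTm M₁ ∪ freeTm M₂
  | Tm.num _ => ∅
  | Tm.predOp => ∅
  | Tm.succOp => ∅
  | Tm.ifOp => ∅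
  | Tm.fix σ => freeTy σ
  | Tm.setOp => ∅
  | Tm.getOp => ∅
  | Tm.gate _ _ => ∅
  | Tm.seqOp => ∅
  | Tm.parOp => ∅
  | Tm.iterOp => ∅
  | Tm.revOp => ∅
  | Tm.add E₀ E₁ => freeTm E₀ ∪ freeTm E₁
  | Tm.mul E₀ E₁ => freeTm E₀ ∪ freeTm E₁
  | Tm.size M => freeTm M
  | Tm.dmeasOp => ∅

def freeTy : Ty → Finset ℕ
  | Ty.nat => ∅
  | Ty.idx => ∅
  | Ty.circ E => freeTm E
  | Ty.arrow σ τ => freeTy σ ∪ freeTy τ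
  | Ty.pi y σ τ => freeTy σ ∪ (freeTy τ \ {y})
end

/-- Bases: finite lists of (variable, type) pairs. -/
abbrev Base := List (ℕ × Ty)

def dom (B : Base) : List ℕ := B.map Prod.fst
def codom (B : Base) : List Ty := B.map Prod.snd
def substBase (B : Base) (x : ℕ) (N : Tm) : Base := B.map fun p => (p.1, substTy p.2 x N)

/-- The function `surf`: collects the typings `B' ⊢ E : Idx` for all index
expressions `E` occurring in Circ-types inside a type. -/
def surfTy : Base → Ty → List (Base × Tm)
  | _, Ty.nat => []
  | _, Ty.idx => []
  | B, Ty.circ E => [(B, E)]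
  | B, Ty.arrow σ τ => surfTy B σ ++ surfTy B τ
  | B, Ty.pi x σ τ => surfTy B σ ++ surfTy ((x, σ) :: B) τ

/-- `surf` extended to a finite set (list) of types. -/
def surfList (B : Base) (l : List Ty) : List (Base × Tm) :=
  (l.map (surfTy B)).flatten

/-- Shape of types admissible for the fixpoint combinator: τ₁ → … → τₙ → γ
with γ ∈ {Nat, Circ E}. -/
inductive YShape : Ty → Prop
  | nat : YShape Ty.nat
  | circ (E : Tm) : YShape (Ty.circ E)
  | arrow (τ σ : Ty) : YShape σ → YShape (Ty.arrow τ σ)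

/-- The typing judgment of qPCF (Table 1). -/
inductive Judg : Base → Tm → Ty → Prop
  | var {B : Base} {x : ℕ} {σ : Ty} :
      (x, σ) ∈ B →
      (∀ p ∈ surfList B (codom B), Judg p.1 p.2 Ty.idx) →
      Judg B (Tm.var x) σ
  | lam {B : Base} {x : ℕ} {σ τ : Ty} {N : Tm} :
      x ∉ dom B → Judg ((x, σ) :: B) N τ →
      Judg B (Tm.lam x σ N) (Ty.pi x σ τ)
  | appPi {B : Base} {P Q : Tm} {x : ℕ} {σ τ : Ty} :
      Judg B P (Ty.pi x σ τ) → Judg B Q σ →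
      Judg B (Tm.app P Q) (substTy τ x Q)
  | appArrow {B : Base} {P Q : Tm} {σ τ : Ty} :
      Judg B P (Ty.arrow σ τ) → Judg B Q σ →
      Judg B (Tm.app P Q) τ
  | succ {B : Base} :
      (∀ p ∈ surfList B (codom B), Judg p.1 p.2 Ty.idx) →
      Judg B Tm.succOp (Ty.arrow Ty.nat Ty.nat)
  | pred {B : Base} :
      (∀ p ∈ surfList B (codom B), Judg p.1 p.2 Ty.idx) →
      Judg B Tm.predOp (Ty.arrow Ty.nat Ty.nat)
  | ifNat {B : Base} :
      (∀ p ∈ surfList B (codom B), Judg p.1 p.2 Ty.idx) →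
      Judg B Tm.ifOp (Ty.arrow Ty.nat (Ty.arrow Ty.nat (Ty.arrow Ty.nat Ty.nat)))
  | ifCirc {B : Base} {E : Tm} :
      Judg B E Ty.idx →
      Judg B Tm.ifOp (Ty.arrow Ty.nat (Ty.arrow (Ty.circ E) (Ty.arrow (Ty.circ E) (Ty.circ E))))
  | fix {B : Base} {σ : Ty} :
      YShape σ →
      (∀ p ∈ surfList B (σ :: codom B), Judg p.1 p.2 Ty.idx) →
      Judg B (Tm.fix σ) (Ty.arrow (Ty.arrow σ σ) σ)
  | get {B : Base} :
      (∀ p ∈ surfList B (codom B), Judg p.1 p.2 Ty.idx) →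
      Judg B Tm.getOp (Ty.arrow Ty.nat (Ty.arrow Ty.nat Ty.nat))
  | set {B : Base} :
      (∀ p ∈ surfList B (codom B), Judg p.1 p.2 Ty.idx) →
      Judg B Tm.setOp (Ty.arrow Ty.nat (Ty.arrow Ty.nat Ty.nat))
  | idxNat {B : Base} {M : Tm} :
      Judg B M Ty.idx → Judg B M Ty.nat
  | num {B : Base} {n : ℕ} :
      (∀ p ∈ surfList B (codom B), Judg p.1 p.2 Ty.idx) →
      Judg B (Tm.num n) Ty.idx
  | add {B : Base} {E₀ E₁ : Tm} :
      Judg B E₀ Ty.idx → Judg B E₁ Ty.idx → Judg B (Tm.add E₀ E₁) Ty.idx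
  | mul {B : Base} {E₀ E₁ : Tm} :
      Judg B E₀ Ty.idx → Judg B E₁ Ty.idx → Judg B (Tm.mul E₀ E₁) Ty.idx
  | size {B : Base} {M E : Tm} :
      Judg B M (Ty.circ E) → Judg B (Tm.size M) Ty.idx
  | gate {B : Base} {u k : ℕ} :
      (∀ p ∈ surfList B (codom B), Judg p.1 p.2 Ty.idx) →
      Judg B (Tm.gate u k) (Ty.circ (Tm.num k))
  | seqOp {B : Base} {E : Tm} :
      Judg B E Ty.idx →
      Judg B Tm.seqOp (Ty.arrow (Ty.circ E) (Ty.arrow (Ty.circ E) (Ty.circ E)))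
  | parOp {B : Base} {E₀ E₁ : Tm} :
      Judg B E₀ Ty.idx → Judg B E₁ Ty.idx →
      Judg B Tm.parOp (Ty.arrow (Ty.circ E₀) (Ty.arrow (Ty.circ E₁)
        (Ty.circ (Tm.add (Tm.add E₀ E₁) (Tm.num 1)))))
  | revOp {B : Base} {E : Tm} :
      Judg B E Ty.idx →
      Judg B Tm.revOp (Ty.arrow (Ty.circ E) (Ty.circ E))
  | iterOp {B : Base} {E₀ E₁ : Tm} {x : ℕ} :
      Judg B E₀ Ty.idx → Judg B E₁ Ty.idx →
      x ∉ dom B → x ∉ freeTm E₀ → x ∉ freeTm E₁ →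
      Judg B Tm.iterOp (Ty.pi x Ty.idx (Ty.arrow (Ty.circ E₀) (Ty.arrow (Ty.circ E₁)
        (Ty.circ (Tm.add E₀ (Tm.mul (Tm.add (Tm.num 1) E₁) (Tm.var x)))))))
  | dmeas {B : Base} {E : Tm} :
      Judg B E Ty.idx →
      Judg B Tm.dmeasOp (Ty.arrow Ty.nat (Ty.arrow (Ty.circ E) Ty.nat))

end QPCF
namespace QPCF

-- Syntactic sugar for applied operators.
def seqC (C₀ C₁ : Tm) : Tm := Tm.app (Tm.app Tm.seqOp C₀) C₁
def parC (C₀ C₁ : Tm) : Tm := Tm.app (Tm.app Tm.parOp C₀) C₁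
def ifC (M L R : Tm) : Tm := Tm.app (Tm.app (Tm.app Tm.ifOp M) L) R
def getC (M N : Tm) : Tm := Tm.app (Tm.app Tm.getOp M) N
def setC (M N : Tm) : Tm := Tm.app (Tm.app Tm.setOp M) N
def revC (M : Tm) : Tm := Tm.app Tm.revOp M
def iterC (E M₀ M₁ : Tm) : Tm := Tm.app (Tm.app (Tm.app Tm.iterOp E) M₀) M₁
def dmeasC (M N : Tm) : Tm := Tm.app (Tm.app Tm.dmeasOp M) N

/-- Iterated application M P₁ … Pₘ. -/
def apps : Tm → List Tm → Tm
  | t, [] => t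
  | t, p :: ps => apps (Tm.app t p) ps

/-- `parN n C₁ C₀` is `C₁ ∥ ⋯ ∥ C₁ ∥ C₀` with `n` copies of `C₁`. -/
def parN : ℕ → Tm → Tm → Tm
  | 0, _, C₀ => C₀
  | n + 1, C₁, C₀ => parC C₁ (parN n C₁ C₀)

/-- (Evaluated) circuits: strings built from gate names, ∶ and ∥. -/
inductive IsCircuit : Tm → Prop
  | gate (u k : ℕ) : IsCircuit (Tm.gate u k)
  | seq {C₀ C₁ : Tm} : IsCircuit C₀ → IsCircuit C₁ → IsCircuit (seqC C₀ C₁)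
  | par {C₀ C₁ : Tm} : IsCircuit C₀ → IsCircuit C₁ → IsCircuit (parC C₀ C₁)

/-- Parameters of the language: the unitary operator associated to each
gate name (of each arity), and the adjoint-renaming `‡` of gate names. -/
structure QParams where
  gU : (u k : ℕ) → Matrix (Fin (2 ^ (k + 1))) (Fin (2 ^ (k + 1))) ℂ
  adj : ℕ → ℕ → ℕ

def kronEquiv (n₀ n₁ : ℕ) :
    Fin (2 ^ (n₀ + 1)) × Fin (2 ^ (n₁ + 1)) ≃ Fin (2 ^ (n₀ + n₁ + 1 + 1)) :=
  finProdFinEquiv.trans (finCongr (by rw [← pow_add]; congr 1; omega))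

/-- `Hilb`: the interpretation of an (evaluated) circuit of arity n+1 as an
operator on the Hilbert space of dimension 2^(n+1), given by the clauses
of Definition 9. -/
inductive HilbRel (P : QParams) :
    (n : ℕ) → Tm → Matrix (Fin (2 ^ (n + 1))) (Fin (2 ^ (n + 1))) ℂ → Prop
  | gate (u k : ℕ) : HilbRel P k (Tm.gate u k) (P.gU u k)
  | seq {n : ℕ} {C₀ C₁ : Tm} {A₀ A₁ : Matrix (Fin (2 ^ (n + 1))) (Fin (2 ^ (n + 1))) ℂ} :
      HilbRel P n C₀ A₀ → HilbRel P n C₁ A₁ →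
      HilbRel P n (seqC C₀ C₁) (A₀ * A₁)
  | par {n₀ n₁ : ℕ} {C₀ C₁ : Tm}
      {A₀ : Matrix (Fin (2 ^ (n₀ + 1))) (Fin (2 ^ (n₀ + 1))) ℂ}
      {A₁ : Matrix (Fin (2 ^ (n₁ + 1))) (Fin (2 ^ (n₁ + 1))) ℂ} :
      HilbRel P n₀ C₀ A₀ → HilbRel P n₁ C₁ A₁ →
      HilbRel P (n₀ + n₁ + 1) (parC C₀ C₁)
        (Matrix.reindex (kronEquiv n₀ n₁) (kronEquiv n₀ n₁)
          (Matrix.kroneckerMap (· * ·) A₀ A₁))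

/-- `circuitEvalRel P n x C i pr`: running the circuit `C` (of arity n+1) on the
basis state determined by `x` and totally measuring yields outcome `i` with
(nonzero) probability `pr`. -/
noncomputable def circuitEvalRel (P : QParams) (n x : ℕ) (C : Tm) (i : ℕ) (pr : ℝ) : Prop :=
  ∃ A, HilbRel P n C A ∧ ∃ hi : i < 2 ^ (n + 1),
    pr = ‖(A.mulVec fun j => if (j : ℕ) = x % 2 ^ (n + 1) then 1 else 0) ⟨i, hi⟩‖ ^ 2
    ∧ 0 < pr

/-- The big-step probabilistic operational semantics of qPCF (Table 2):
`Eval P M α V` formalizes `M ⇓^α V`. -/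
inductive Eval (P : QParams) : Tm → ℝ → Tm → Prop
  | num (n : ℕ) : Eval P (Tm.num n) 1 (Tm.num n)
  | succ {M : Tm} {n : ℕ} {α : ℝ} :
      Eval P M α (Tm.num n) → Eval P (Tm.app Tm.succOp M) α (Tm.num (n + 1))
  | pred {M : Tm} {n : ℕ} {α : ℝ} :
      Eval P M α (Tm.num (n + 1)) → Eval P (Tm.app Tm.predOp M) α (Tm.num n)
  | beta {x : ℕ} {σ : Ty} {M N V : Tm} {Ps : List Tm} {α : ℝ} :
      Eval P (apps (substTm M x N) Ps) α V →
      Eval P (apps (Tm.app (Tm.lam x σ M) N) Ps) α V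
  | ifL {M L R V : Tm} {α α' : ℝ} :
      Eval P M α (Tm.num 0) → Eval P L α' V → Eval P (ifC M L R) (α * α') V
  | ifR {M L R V : Tm} {n : ℕ} {α α' : ℝ} :
      Eval P M α (Tm.num (n + 1)) → Eval P R α' V → Eval P (ifC M L R) (α * α') V
  | fix {σ : Ty} {M V : Tm} {Ps : List Tm} {α : ℝ} :
      Eval P (apps (Tm.app M (Tm.app (Tm.fix σ) M)) Ps) α V →
      Eval P (apps (Tm.app (Tm.fix σ) M) Ps) α V
  | size {M E : Tm} {n : ℕ} {α : ℝ} :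
      Judg [] M (Ty.circ E) → Eval P E α (Tm.num n) →
      Eval P (Tm.size M) α (Tm.num n)
  | add {E₀ E₁ : Tm} {m n : ℕ} {α α' : ℝ} :
      Eval P E₀ α (Tm.num m) → Eval P E₁ α' (Tm.num n) →
      Eval P (Tm.add E₀ E₁) (α * α') (Tm.num (m + n))
  | mul {E₀ E₁ : Tm} {m n : ℕ} {α α' : ℝ} :
      Eval P E₀ α (Tm.num m) → Eval P E₁ α' (Tm.num n) →
      Eval P (Tm.mul E₀ E₁) (α * α') (Tm.num (m * n))
  | get {M N : Tm} {m n : ℕ} {α α' : ℝ} :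
      Eval P M α (Tm.num m) → Eval P N α' (Tm.num n) →
      Eval P (getC M N) (α * α') (Tm.num (m / 2 ^ n % 2))
  | set {M N : Tm} {m n m' : ℕ} {α α' : ℝ} :
      Eval P M α (Tm.num m) → Eval P N α' (Tm.num n) →
      m' / 2 ^ n % 2 = 1 → (∀ k, k ≠ n → m' / 2 ^ k % 2 = m / 2 ^ k % 2) →
      Eval P (setC M N) (α * α') (Tm.num m')
  | gate (u k : ℕ) : Eval P (Tm.gate u k) 1 (Tm.gate u k)
  | seq {M₀ M₁ C₀ C₁ : Tm} {α α' : ℝ} :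
      Eval P M₀ α C₀ → Eval P M₁ α' C₁ →
      Eval P (seqC M₀ M₁) (α * α') (seqC C₀ C₁)
  | par {M₀ M₁ C₀ C₁ : Tm} {α α' : ℝ} :
      Eval P M₀ α C₀ → Eval P M₁ α' C₁ →
      Eval P (parC M₀ M₁) (α * α') (parC C₁ C₀)
  | rev₀ {M : Tm} {u k : ℕ} {α : ℝ} :
      Eval P M α (Tm.gate u k) → Eval P (revC M) α (Tm.gate (P.adj u k) k)
  | rev₁ {M C₀ C₁ C₀' C₁' : Tm} {α α' α'' : ℝ} :
      Eval P M α (seqC C₀ C₁) → Eval P (revC C₀) α' C₀' → Eval P (revC C₁) α'' C₁' →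
      Eval P (revC M) (α * α' * α'') (seqC C₁' C₀')
  | rev₂ {M C₀ C₁ C₀' C₁' : Tm} {α α' α'' : ℝ} :
      Eval P M α (parC C₀ C₁) → Eval P (revC C₀) α' C₀' → Eval P (revC C₁) α'' C₁' →
      Eval P (revC M) (α * α' * α'') (parC C₀' C₁')
  | iter {E M₀ M₁ C₀ C₁ : Tm} {n : ℕ} {α α' α'' : ℝ} :
      Eval P E α (Tm.num n) → Eval P M₀ α' C₀ → Eval P M₁ α'' C₁ →
      Eval P (iterC E M₀ M₁) (α * α' * α'') (parN n C₁ C₀)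
  | dmeas {M N C : Tm} {m k n : ℕ} {α α' α'' : ℝ} :
      Eval P M α (Tm.num m) → Eval P N α' C →
      Judg [] N (Ty.circ (Tm.num k)) →
      circuitEvalRel P k m C n α'' →
      Eval P (dmeasC M N) (α * α' * α'') (Tm.num n)

/-- `M ⇓ V`: there exists an evaluation of `M` to `V` with some probability 0 < α ≤ 1. -/
def EvalSome (P : QParams) (M V : Tm) : Prop := ∃ α : ℝ, 0 < α ∧ α ≤ 1 ∧ Eval P M α V

end QPCF
namespace QPCF

/-- Structural depth of a type (number of arrow/Π constructors). -/
def Ty.depth : Ty → ℕ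
  | Ty.nat => 0
  | Ty.idx => 0
  | Ty.circ _ => 0
  | Ty.arrow σ τ => σ.depth + τ.depth + 1
  | Ty.pi _ σ τ => σ.depth + τ.depth + 1

theorem substTy_depth : ∀ (σ : Ty) (x : ℕ) (N : Tm), (substTy σ x N).depth = σ.depth
  | Ty.nat, _, _ => rfl
  | Ty.idx, _, _ => rfl
  | Ty.circ _, _, _ => rfl
  | Ty.arrow σ τ, x, N => by
      simp [substTy, Ty.depth, substTy_depth σ x N, substTy_depth τ x N]
  | Ty.pi y σ τ, x, N => by
      by_cases h : y = x <;>
        simp [substTy, Ty.depth, h, substTy_depth σ x N, substTy_depth τ x N]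

@[simp] theorem substBase_length (B : Base) (x : ℕ) (N : Tm) :
    (substBase B x N).length = B.length := by
  simp [substBase]

/-- The computability predicate `Comp` (Definition 7). -/
def Comp (P : QParams) : Base → Tm → Ty → Prop
  | [], M, Ty.nat => Judg [] M Ty.nat
  | [], M, Ty.idx => Judg [] M Ty.idx ∧ ∃ n, Eval P M 1 (Tm.num n)
  | [], M, Ty.circ E =>
      Judg [] M (Ty.circ E) ∧ (Judg [] E Ty.idx ∧ ∃ n, Eval P E 1 (Tm.num n))
  | [], M, Ty.arrow μ τ =>
      Judg [] M (Ty.arrow μ τ) ∧ ∀ N, Comp P [] N μ → Comp P [] (Tm.app M N) τ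
  | [], M, Ty.pi x μ τ =>
      Judg [] M (Ty.pi x μ τ) ∧
        ∀ N, Comp P [] N μ → Comp P [] (Tm.app M N) (substTy τ x N)
  | (x, ν) :: B', M, σ =>
      Judg ((x, ν) :: B') M σ ∧
        ∀ N, Comp P [] N ν →
          Comp P (substBase B' x N) (substTm M x N) (substTy σ x N)
termination_by B _ σ => (B.length, Ty.depth σ)
decreasing_by
  · exact Prod.Lex.right _ (by simp [Ty.depth] <;> omega)
  · exact Prod.Lex.right _ (by simp [Ty.depth] <;> omega)
  · exact Prod.Lex.right _ (by simp [Ty.depth] <;> omega)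
  · exact Prod.Lex.right _ (by simp [substTy_depth, Ty.depth] <;> omega)
  · exact Prod.Lex.left _ _ (by simp)
  · exact Prod.Lex.left _ _ (by simp [substBase])

end QPCF
namespace QPCF

/-- `piTelescope [(z₁,τ₁),…,(zₘ,τₘ)] γ` is `Πz₁^τ₁.…Πzₘ^τₘ.γ`. -/
def piTelescope : List (ℕ × Ty) → Ty → Ty
  | [], γ => γ
  | (z, τ) :: rest, γ => Ty.pi z τ (piTelescope rest γ)

/-- Iterated substitution on terms: `M[N₁/x₁]⋯[Nₖ/xₖ]`. -/
def substTmList : Tm → List (ℕ × Tm) → Tm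
  | M, [] => M
  | M, (x, N) :: rest => substTmList (substTm M x N) rest

/-- Iterated substitution on types: `σ[N₁/x₁]⋯[Nₖ/xₖ]`. -/
def substTyList : Ty → List (ℕ × Tm) → Ty
  | σ, [] => σ
  | σ, (x, N) :: rest => substTyList (substTy σ x N) rest

/-- Pair variables with the terms to be substituted for them. -/
def pairSub (xs : List ℕ) (Ns : List Tm) : List (ℕ × Tm) := List.zip xs Ns

/-- qPCF contexts: terms with a single hole. -/
inductive Ctx : Type
  | hole : Ctx
  | lam : ℕ → Ty → Ctx → Ctx
  | appL : Ctx → Tm → Ctx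
  | appR : Tm → Ctx → Ctx
  | addL : Ctx → Tm → Ctx
  | addR : Tm → Ctx → Ctx
  | mulL : Ctx → Tm → Ctx
  | mulR : Tm → Ctx → Ctx
  | size : Ctx → Ctx

/-- Filling the hole of a context with a term. -/
def Ctx.fill : Ctx → Tm → Tm
  | Ctx.hole, M => M
  | Ctx.lam x σ C, M => Tm.lam x σ (C.fill M)
  | Ctx.appL C N, M => Tm.app (C.fill M) N
  | Ctx.appR N C, M => Tm.app N (C.fill M)
  | Ctx.addL C N, M => Tm.add (C.fill M) N
  | Ctx.addR N C, M => Tm.add N (C.fill M)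
  | Ctx.mulL C N, M => Tm.mul (C.fill M) N
  | Ctx.mulR N C, M => Tm.mul N (C.fill M)
  | Ctx.size C, M => Tm.size (C.fill M)

-- Syntactic occurrence of a type inside a type / a term.
mutual
inductive OccTy : Ty → Ty → Prop
  | refl (t : Ty) : OccTy t t
  | circ {t : Ty} {E : Tm} : OccTm t E → OccTy t (Ty.circ E)
  | arrowL {t σ τ : Ty} : OccTy t σ → OccTy t (Ty.arrow σ τ)
  | arrowR {t σ τ : Ty} : OccTy t τ → OccTy t (Ty.arrow σ τ)
  | piL {t σ τ : Ty} {x : ℕ} : OccTy t σ → OccTy t (Ty.pi x σ τ)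
  | piR {t σ τ : Ty} {x : ℕ} : OccTy t τ → OccTy t (Ty.pi x σ τ)

inductive OccTm : Ty → Tm → Prop
  | lamTy {t : Ty} {x : ℕ} {σ : Ty} {M : Tm} : OccTy t σ → OccTm t (Tm.lam x σ M)
  | lamBody {t : Ty} {x : ℕ} {σ : Ty} {M : Tm} : OccTm t M → OccTm t (Tm.lam x σ M)
  | appL {t : Ty} {M N : Tm} : OccTm t M → OccTm t (Tm.app M N)
  | appR {t : Ty} {M N : Tm} : OccTm t N → OccTm t (Tm.app M N)
  | fix {t σ : Ty} : OccTy t σ → OccTm t (Tm.fix σ)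
  | addL {t : Ty} {M N : Tm} : OccTm t M → OccTm t (Tm.add M N)
  | addR {t : Ty} {M N : Tm} : OccTm t N → OccTm t (Tm.add M N)
  | mulL {t : Ty} {M N : Tm} : OccTm t M → OccTm t (Tm.mul M N)
  | mulR {t : Ty} {M N : Tm} : OccTm t N → OccTm t (Tm.mul M N)
  | size {t : Ty} {M : Tm} : OccTm t M → OccTm t (Tm.size M)
end

/-- A type occurs (syntactically) in a typing judgment `B ⊢ M : σ` if it occurs
in some type of the base `B`, in the subject `M`, or in the type `σ`. -/
def OccJudgment (t : Ty) (j : Base × Tm × Ty) : Prop :=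
  (∃ τ ∈ codom j.1, OccTy t τ) ∨ OccTm t j.2.1 ∨ OccTy t j.2.2

/-- `Reach B M σ (B', M', σ')` holds iff some typing derivation concluding
`B ⊢ M : σ` contains a (sub)derivation concluding `B' ⊢ M' : σ'`: it mirrors
the rules of Table 1, descending into one premise. -/
inductive Reach : Base → Tm → Ty → Base × Tm × Ty → Prop
  | here {B : Base} {M : Tm} {σ : Ty} :
      Judg B M σ → Reach B M σ (B, M, σ)
  | var {B : Base} {x : ℕ} {σ : Ty} {q : Base × Tm} {j} :
      (x, σ) ∈ B →
      (∀ p ∈ surfList B (codom B), Judg p.1 p.2 Ty.idx) →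
      q ∈ surfList B (codom B) → Reach q.1 q.2 Ty.idx j →
      Reach B (Tm.var x) σ j
  | lam {B : Base} {x : ℕ} {σ τ : Ty} {N : Tm} {j} :
      x ∉ dom B → Reach ((x, σ) :: B) N τ j →
      Reach B (Tm.lam x σ N) (Ty.pi x σ τ) j
  | appPi₁ {B : Base} {P Q : Tm} {x : ℕ} {σ τ : Ty} {j} :
      Reach B P (Ty.pi x σ τ) j → Judg B Q σ →
      Reach B (Tm.app P Q) (substTy τ x Q) j
  | appPi₂ {B : Base} {P Q : Tm} {x : ℕ} {σ τ : Ty} {j} :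
      Judg B P (Ty.pi x σ τ) → Reach B Q σ j →
      Reach B (Tm.app P Q) (substTy τ x Q) j
  | appArrow₁ {B : Base} {P Q : Tm} {σ τ : Ty} {j} :
      Reach B P (Ty.arrow σ τ) j → Judg B Q σ →
      Reach B (Tm.app P Q) τ j
  | appArrow₂ {B : Base} {P Q : Tm} {σ τ : Ty} {j} :
      Judg B P (Ty.arrow σ τ) → Reach B Q σ j →
      Reach B (Tm.app P Q) τ j
  | succ {B : Base} {q : Base × Tm} {j} :
      (∀ p ∈ surfList B (codom B), Judg p.1 p.2 Ty.idx) →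
      q ∈ surfList B (codom B) → Reach q.1 q.2 Ty.idx j →
      Reach B Tm.succOp (Ty.arrow Ty.nat Ty.nat) j
  | pred {B : Base} {q : Base × Tm} {j} :
      (∀ p ∈ surfList B (codom B), Judg p.1 p.2 Ty.idx) →
      q ∈ surfList B (codom B) → Reach q.1 q.2 Ty.idx j →
      Reach B Tm.predOp (Ty.arrow Ty.nat Ty.nat) j
  | ifNat {B : Base} {q : Base × Tm} {j} :
      (∀ p ∈ surfList B (codom B), Judg p.1 p.2 Ty.idx) →
      q ∈ surfList B (codom B) → Reach q.1 q.2 Ty.idx j →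
      Reach B Tm.ifOp (Ty.arrow Ty.nat (Ty.arrow Ty.nat (Ty.arrow Ty.nat Ty.nat))) j
  | ifCirc {B : Base} {E : Tm} {j} :
      Reach B E Ty.idx j →
      Reach B Tm.ifOp (Ty.arrow Ty.nat (Ty.arrow (Ty.circ E) (Ty.arrow (Ty.circ E) (Ty.circ E)))) j
  | fix {B : Base} {σ : Ty} {q : Base × Tm} {j} :
      YShape σ →
      (∀ p ∈ surfList B (σ :: codom B), Judg p.1 p.2 Ty.idx) →
      q ∈ surfList B (σ :: codom B) → Reach q.1 q.2 Ty.idx j →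
      Reach B (Tm.fix σ) (Ty.arrow (Ty.arrow σ σ) σ) j
  | get {B : Base} {q : Base × Tm} {j} :
      (∀ p ∈ surfList B (codom B), Judg p.1 p.2 Ty.idx) →
      q ∈ surfList B (codom B) → Reach q.1 q.2 Ty.idx j →
      Reach B Tm.getOp (Ty.arrow Ty.nat (Ty.arrow Ty.nat Ty.nat)) j
  | set {B : Base} {q : Base × Tm} {j} :
      (∀ p ∈ surfList B (codom B), Judg p.1 p.2 Ty.idx) →
      q ∈ surfList B (codom B) → Reach q.1 q.2 Ty.idx j →
      Reach B Tm.setOp (Ty.arrow Ty.nat (Ty.arrow Ty.nat Ty.nat)) j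
  | idxNat {B : Base} {M : Tm} {j} :
      Reach B M Ty.idx j → Reach B M Ty.nat j
  | num {B : Base} {n : ℕ} {q : Base × Tm} {j} :
      (∀ p ∈ surfList B (codom B), Judg p.1 p.2 Ty.idx) →
      q ∈ surfList B (codom B) → Reach q.1 q.2 Ty.idx j →
      Reach B (Tm.num n) Ty.idx j
  | add₁ {B : Base} {E₀ E₁ : Tm} {j} :
      Reach B E₀ Ty.idx j → Judg B E₁ Ty.idx → Reach B (Tm.add E₀ E₁) Ty.idx j
  | add₂ {B : Base} {E₀ E₁ : Tm} {j} :
      Judg B E₀ Ty.idx → Reach B E₁ Ty.idx j → Reach B (Tm.add E₀ E₁) Ty.idx j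
  | mul₁ {B : Base} {E₀ E₁ : Tm} {j} :
      Reach B E₀ Ty.idx j → Judg B E₁ Ty.idx → Reach B (Tm.mul E₀ E₁) Ty.idx j
  | mul₂ {B : Base} {E₀ E₁ : Tm} {j} :
      Judg B E₀ Ty.idx → Reach B E₁ Ty.idx j → Reach B (Tm.mul E₀ E₁) Ty.idx j
  | size {B : Base} {M E : Tm} {j} :
      Reach B M (Ty.circ E) j → Reach B (Tm.size M) Ty.idx j
  | gate {B : Base} {u k : ℕ} {q : Base × Tm} {j} :
      (∀ p ∈ surfList B (codom B), Judg p.1 p.2 Ty.idx) →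
      q ∈ surfList B (codom B) → Reach q.1 q.2 Ty.idx j →
      Reach B (Tm.gate u k) (Ty.circ (Tm.num k)) j
  | seqOp {B : Base} {E : Tm} {j} :
      Reach B E Ty.idx j →
      Reach B Tm.seqOp (Ty.arrow (Ty.circ E) (Ty.arrow (Ty.circ E) (Ty.circ E))) j
  | parOp₁ {B : Base} {E₀ E₁ : Tm} {j} :
      Reach B E₀ Ty.idx j → Judg B E₁ Ty.idx →
      Reach B Tm.parOp (Ty.arrow (Ty.circ E₀) (Ty.arrow (Ty.circ E₁)
        (Ty.circ (Tm.add (Tm.add E₀ E₁) (Tm.num 1))))) j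
  | parOp₂ {B : Base} {E₀ E₁ : Tm} {j} :
      Judg B E₀ Ty.idx → Reach B E₁ Ty.idx j →
      Reach B Tm.parOp (Ty.arrow (Ty.circ E₀) (Ty.arrow (Ty.circ E₁)
        (Ty.circ (Tm.add (Tm.add E₀ E₁) (Tm.num 1))))) j
  | revOp {B : Base} {E : Tm} {j} :
      Reach B E Ty.idx j →
      Reach B Tm.revOp (Ty.arrow (Ty.circ E) (Ty.circ E)) j
  | iterOp₁ {B : Base} {E₀ E₁ : Tm} {x : ℕ} {j} :
      Reach B E₀ Ty.idx j → Judg B E₁ Ty.idx →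
      x ∉ dom B → x ∉ freeTm E₀ → x ∉ freeTm E₁ →
      Reach B Tm.iterOp (Ty.pi x Ty.idx (Ty.arrow (Ty.circ E₀) (Ty.arrow (Ty.circ E₁)
        (Ty.circ (Tm.add E₀ (Tm.mul (Tm.add (Tm.num 1) E₁) (Tm.var x))))))) j
  | iterOp₂ {B : Base} {E₀ E₁ : Tm} {x : ℕ} {j} :
      Judg B E₀ Ty.idx → Reach B E₁ Ty.idx j →
      x ∉ dom B → x ∉ freeTm E₀ → x ∉ freeTm E₁ →
      Reach B Tm.iterOp (Ty.pi x Ty.idx (Ty.arrow (Ty.circ E₀) (Ty.arrow (Ty.circ E₁)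
        (Ty.circ (Tm.add E₀ (Tm.mul (Tm.add (Tm.num 1) E₁) (Tm.var x))))))) j
  | dmeas {B : Base} {E : Tm} {j} :
      Reach B E Ty.idx j →
      Reach B Tm.dmeasOp (Ty.arrow Ty.nat (Ty.arrow (Ty.circ E) Ty.nat)) j

end QPCF

/-!
The proof erases qPCF types to simple types, forgetting the index expressions
in circuit types and the distinction between `Idx` and `Nat`. Erasure is sound
for the typing rules, simple types are preserved by evaluation, and every value
of the big-step semantics is a numeral or a circuit built from a gate, `∶` or `∥`.
A closed term of type `Idx` therefore evaluates to a numeral, and numerals are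
typable at `Idx` in the empty base.
-/

namespace QPCF

inductive SimpleTy : Type
  | nat : SimpleTy
  | circ : SimpleTy
  | arrow : SimpleTy → SimpleTy → SimpleTy

abbrev SEnv := ℕ → Option SimpleTy

def erase : Ty → SimpleTy
  | Ty.nat => SimpleTy.nat
  | Ty.idx => SimpleTy.nat
  | Ty.circ _ => SimpleTy.circ
  | Ty.arrow σ τ => SimpleTy.arrow (erase σ) (erase τ)
  | Ty.pi _ σ τ => SimpleTy.arrow (erase σ) (erase τ)

theorem erase_substTy (x : ℕ) (N : Tm) : ∀ τ : Ty, erase (substTy τ x N) = erase τ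
  | Ty.nat | Ty.idx | Ty.circ _ => rfl
  | Ty.arrow σ τ => by simp only [substTy, erase, erase_substTy x N σ, erase_substTy x N τ]
  | Ty.pi y σ τ => by
      by_cases h : y = x <;> simp [substTy, erase, h, erase_substTy x N σ, erase_substTy x N τ]

/-- With no coercion rule and no freshness side conditions, this simple type system is
syntax-directed and stable under substitution. -/
inductive STyped : SEnv → Tm → SimpleTy → Prop
  | var {ρ x s} : ρ x = some s → STyped ρ (Tm.var x) s
  | lam {ρ x σ M s} :
      STyped (Function.update ρ x (some (erase σ))) M s →
      STyped ρ (Tm.lam x σ M) (.arrow (erase σ) s)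
  | app {ρ M N t s} : STyped ρ M (.arrow t s) → STyped ρ N t → STyped ρ (Tm.app M N) s
  | num {ρ n} : STyped ρ (Tm.num n) .nat
  | succ {ρ} : STyped ρ Tm.succOp (.arrow .nat .nat)
  | pred {ρ} : STyped ρ Tm.predOp (.arrow .nat .nat)
  | ifNat {ρ} : STyped ρ Tm.ifOp (.arrow .nat (.arrow .nat (.arrow .nat .nat)))
  | ifCirc {ρ} : STyped ρ Tm.ifOp (.arrow .nat (.arrow .circ (.arrow .circ .circ)))
  | fix {ρ σ} : STyped ρ (Tm.fix σ) (.arrow (.arrow (erase σ) (erase σ)) (erase σ))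
  | getOp {ρ} : STyped ρ Tm.getOp (.arrow .nat (.arrow .nat .nat))
  | setOp {ρ} : STyped ρ Tm.setOp (.arrow .nat (.arrow .nat .nat))
  | add {ρ E₀ E₁} : STyped ρ E₀ .nat → STyped ρ E₁ .nat → STyped ρ (Tm.add E₀ E₁) .nat
  | mul {ρ E₀ E₁} : STyped ρ E₀ .nat → STyped ρ E₁ .nat → STyped ρ (Tm.mul E₀ E₁) .nat
  | size {ρ M} : STyped ρ M .circ → STyped ρ (Tm.size M) .nat
  | gate {ρ u k} : STyped ρ (Tm.gate u k) .circ
  | seqOp {ρ} : STyped ρ Tm.seqOp (.arrow .circ (.arrow .circ .circ))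
  | parOp {ρ} : STyped ρ Tm.parOp (.arrow .circ (.arrow .circ .circ))
  | revOp {ρ} : STyped ρ Tm.revOp (.arrow .circ .circ)
  | iterOp {ρ} : STyped ρ Tm.iterOp (.arrow .nat (.arrow .circ (.arrow .circ .circ)))
  | dmeasOp {ρ} : STyped ρ Tm.dmeasOp (.arrow .nat (.arrow .circ .nat))

namespace STyped

theorem mono {ρ ρ' : SEnv} {M : Tm} {s : SimpleTy} (h : STyped ρ M s)
    (hρ : ∀ y v, ρ y = some v → ρ' y = some v) : STyped ρ' M s := by
  induction h generalizing ρ' with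
  | var hy => exact .var (hρ _ _ hy)
  | @lam ρ x σ M s _ ih =>
      refine .lam (ih fun y v hy => ?_)
      rcases eq_or_ne y x with rfl | hne
      · simpa using hy
      · rw [Function.update_of_ne hne] at hy ⊢
        exact hρ _ _ hy
  | app _ _ ih₁ ih₂ => exact .app (ih₁ hρ) (ih₂ hρ)
  | add _ _ ih₁ ih₂ => exact .add (ih₁ hρ) (ih₂ hρ)
  | mul _ _ ih₁ ih₂ => exact .mul (ih₁ hρ) (ih₂ hρ)
  | size _ ih => exact .size (ih hρ)
  | _ => constructor

theorem of_closed {ρ : SEnv} {M : Tm} {s : SimpleTy} (h : STyped (fun _ => none) M s) :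
    STyped ρ M s :=
  h.mono fun _ _ hy => by simp at hy

theorem subst {ρ : SEnv} {M N : Tm} {x : ℕ} {s t : SimpleTy} (h : STyped ρ M s)
    (hx : ρ x = some t) (hN : ∀ ρ', STyped ρ' N t) :
    STyped (Function.update ρ x none) (substTm M x N) s := by
  induction h with
  | @var ρ y s hy =>
      by_cases hyx : y = x
      · subst hyx
        obtain rfl : s = t := Option.some.inj (hy.symm.trans hx)
        simpa [substTm] using hN _
      · rw [substTm, if_neg hyx]
        exact .var (by rwa [Function.update_of_ne hyx])
  | @lam ρ y σ M s hM ih =>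
      rw [substTm, ← erase_substTy x N σ]
      refine .lam ?_
      rw [erase_substTy]
      by_cases hyx : y = x
      · subst hyx
        simpa using hM
      · rw [if_neg hyx, Function.update_comm (Ne.symm hyx)]
        exact ih (by rwa [Function.update_of_ne (Ne.symm hyx)])
  | app _ _ ih₁ ih₂ => exact .app (ih₁ hx) (ih₂ hx)
  | add _ _ ih₁ ih₂ => exact .add (ih₁ hx) (ih₂ hx)
  | mul _ _ ih₁ ih₂ => exact .mul (ih₁ hx) (ih₂ hx)
  | size _ ih => exact .size (ih hx)
  | @fix ρ σ =>
      rw [substTm, ← erase_substTy x N σ]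
      exact .fix
  | _ => constructor

theorem app_inv {ρ : SEnv} {M N : Tm} {s : SimpleTy} (h : STyped ρ (Tm.app M N) s) :
    ∃ t, STyped ρ M (.arrow t s) ∧ STyped ρ N t := by
  cases h with
  | app hM hN => exact ⟨_, hM, hN⟩

theorem app₂_inv {ρ : SEnv} {F M N : Tm} {s : SimpleTy}
    (h : STyped ρ (Tm.app (Tm.app F M) N) s) :
    ∃ t u, STyped ρ F (.arrow t (.arrow u s)) ∧ STyped ρ M t ∧ STyped ρ N u := by
  obtain ⟨u, hFM, hN⟩ := h.app_inv
  obtain ⟨t, hF, hM⟩ := hFM.app_inv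
  exact ⟨t, u, hF, hM, hN⟩

theorem ifC_inv {ρ : SEnv} {M L R : Tm} {s : SimpleTy} (h : STyped ρ (ifC M L R) s) :
    STyped ρ L s ∧ STyped ρ R s := by
  obtain ⟨_, _, hif, hL, hR⟩ := h.app₂_inv
  obtain ⟨_, hop, -⟩ := hif.app_inv
  cases hop <;> exact ⟨hL, hR⟩

theorem fix_unfold {ρ : SEnv} {σ : Ty} {M : Tm} {s : SimpleTy}
    (h : STyped ρ (Tm.app (Tm.fix σ) M) s) : STyped ρ (Tm.app M (Tm.app (Tm.fix σ) M)) s := by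
  obtain ⟨_, hfix, hM⟩ := h.app_inv
  cases hfix
  exact .app hM (.app .fix hM)

theorem beta {x : ℕ} {σ : Ty} {M N : Tm} {s : SimpleTy}
    (h : STyped (fun _ => none) (Tm.app (Tm.lam x σ M) N) s) :
    STyped (fun _ => none) (substTm M x N) s := by
  obtain ⟨_, hlam, hN⟩ := h.app_inv
  cases hlam with
  | lam hM => simpa using hM.subst (Function.update_self _ _ _) fun _ => hN.of_closed

theorem apps_of_head {ρ : SEnv} {H H' : Tm} (hH : ∀ s, STyped ρ H s → STyped ρ H' s) :
    ∀ (Ps : List Tm) {s}, STyped ρ (apps H Ps) s → STyped ρ (apps H' Ps) s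
  | [], s, h => hH s h
  | _ :: Ps, _, h => apps_of_head (fun _ h => by
      obtain ⟨_, hH₀, hP⟩ := h.app_inv
      exact .app (hH _ hH₀) hP) Ps h

theorem parN {ρ : SEnv} {C₀ C₁ : Tm} (h₀ : STyped ρ C₀ .circ) (h₁ : STyped ρ C₁ .circ) :
    ∀ n, STyped ρ (QPCF.parN n C₁ C₀) .circ
  | 0 => h₀
  | n + 1 => .app (.app .parOp h₁) (parN h₀ h₁ n)

end STyped

theorem Judg.sTyped {B : Base} {M : Tm} {τ : Ty} (h : Judg B M τ) {ρ : SEnv}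
    (hρ : ∀ p ∈ B, ρ p.1 = some (erase p.2)) : STyped ρ M (erase τ) := by
  induction h generalizing ρ with
  | var hmem _ _ => exact .var (hρ _ hmem)
  | @lam B x σ τ N hx _ ih =>
      refine .lam (ih ?_)
      rintro ⟨y, ν⟩ hp
      rcases List.mem_cons.1 hp with hp | hp
      · cases hp
        simp
      · have hyx : y ≠ x := fun hyx => hx (hyx ▸ List.mem_map_of_mem (f := Prod.fst) hp)
        simpa [Function.update_of_ne hyx] using hρ _ hp
  | appPi _ _ ih₁ ih₂ => rw [erase_substTy]; exact .app (ih₁ hρ) (ih₂ hρ)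
  | appArrow _ _ ih₁ ih₂ => exact .app (ih₁ hρ) (ih₂ hρ)
  | idxNat _ ih => exact ih hρ
  | add _ _ ih₁ ih₂ => exact .add (ih₁ hρ) (ih₂ hρ)
  | mul _ _ ih₁ ih₂ => exact .mul (ih₁ hρ) (ih₂ hρ)
  | size _ ih => exact .size (ih hρ)
  | _ => constructor

theorem Eval.sTyped {P : QParams} {M V : Tm} {α : ℝ} (he : Eval P M α V) {s : SimpleTy}
    (hM : STyped (fun _ => none) M s) : STyped (fun _ => none) V s := by
  induction he generalizing s with
  | num | gate => exact hM
  | beta _ ih => exact ih (STyped.apps_of_head (fun _ => STyped.beta) _ hM)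
  | fix _ ih => exact ih (STyped.apps_of_head (fun _ => STyped.fix_unfold) _ hM)
  | ifL _ _ _ ih => exact ih hM.ifC_inv.1
  | ifR _ _ _ ih => exact ih hM.ifC_inv.2
  | succ | pred | rev₀ =>
      obtain ⟨_, hop, -⟩ := hM.app_inv
      cases hop
      constructor
  | size | add | mul =>
      cases hM
      exact .num
  | get | set | dmeas =>
      obtain ⟨_, _, hop, -, -⟩ := hM.app₂_inv
      cases hop
      exact .num
  | seq _ _ ih₀ ih₁ =>
      obtain ⟨_, _, hop, h₀, h₁⟩ := hM.app₂_inv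
      cases hop
      exact .app (.app .seqOp (ih₀ h₀)) (ih₁ h₁)
  | par _ _ ih₀ ih₁ =>
      obtain ⟨_, _, hop, h₀, h₁⟩ := hM.app₂_inv
      cases hop
      exact .app (.app .parOp (ih₁ h₁)) (ih₀ h₀)
  | rev₁ _ _ _ ih ih₀ ih₁ =>
      obtain ⟨_, hop, hC⟩ := hM.app_inv
      cases hop
      obtain ⟨_, _, hop, h₀, h₁⟩ := (ih hC).app₂_inv
      cases hop
      exact .app (.app .seqOp (ih₁ (.app .revOp h₁))) (ih₀ (.app .revOp h₀))
  | rev₂ _ _ _ ih ih₀ ih₁ =>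
      obtain ⟨_, hop, hC⟩ := hM.app_inv
      cases hop
      obtain ⟨_, _, hop, h₀, h₁⟩ := (ih hC).app₂_inv
      cases hop
      exact .app (.app .parOp (ih₀ (.app .revOp h₀))) (ih₁ (.app .revOp h₁))
  | iter _ _ _ _ ih₀ ih₁ =>
      obtain ⟨_, _, hiter, h₀, h₁⟩ := hM.app₂_inv
      obtain ⟨_, hop, -⟩ := hiter.app_inv
      cases hop
      exact .parN (ih₀ h₀) (ih₁ h₁) _

inductive ValueForm : Tm → Prop
  | num (n : ℕ) : ValueForm (Tm.num n)
  | gate (u k : ℕ) : ValueForm (Tm.gate u k)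
  | seq (C₀ C₁ : Tm) : ValueForm (seqC C₀ C₁)
  | par (C₀ C₁ : Tm) : ValueForm (parC C₀ C₁)

theorem ValueForm.parN {C₀ : Tm} (h : ValueForm C₀) (C₁ : Tm) :
    ∀ n, ValueForm (QPCF.parN n C₁ C₀)
  | 0 => h
  | _ + 1 => .par C₁ _

theorem Eval.valueForm {P : QParams} {M V : Tm} {α : ℝ} (he : Eval P M α V) : ValueForm V := by
  induction he with
  | beta _ ih | ifL _ _ _ ih | ifR _ _ _ ih | fix _ ih => exact ih
  | gate u k => exact .gate u k
  | seq => exact .seq _ _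
  | par => exact .par _ _
  | rev₀ => exact .gate _ _
  | rev₁ => exact .seq _ _
  | rev₂ => exact .par _ _
  | iter _ _ _ _ ih _ => exact ih.parN _ _
  | _ => exact .num _

theorem ValueForm.eq_num {ρ : SEnv} {V : Tm} (hV : ValueForm V) (h : STyped ρ V .nat) :
    ∃ n, V = Tm.num n := by
  cases hV with
  | num => exact ⟨_, rfl⟩
  | gate => cases h
  | seq | par =>
      obtain ⟨_, _, hop, -, -⟩ := h.app₂_inv
      cases hop

/-- Corollary 2, Preservation at Idx: if ⊢ M : Idx and
M ⇓¹ N then ⊢ N : Idx. -/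
theorem idx_preservation (P : QParams) (M N : Tm)
    (h : Judg [] M Ty.idx) (he : Eval P M 1 N) : Judg [] N Ty.idx := by
  have hM : STyped (fun _ => none) M .nat := h.sTyped (by simp)
  obtain ⟨n, rfl⟩ := he.valueForm.eq_num (he.sTyped hM)
  exact .num (by simp [surfList, codom])

end QPCF
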